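/- Conditional-expectation identity for Goldreich–Levin-type queries (equation (4.17) in the proof of Lemma 4.4). Let O ∈ ℂ^{2^n × 2^n} be Hermitian with Pauli expansion O = Σ_{Q∈𝒫} c_Q Q. Fix T ⊆ {1,…,n}, a Pauli X ∈ 𝒫 with supp(X) ∩ T = ∅, and fixed values A_i ∈ {σ_x,σ_y,σ_z} and v_i ∈ {±1} for each i ∈ T. Then the average, over all choices of A_i ∈ {σ_x,σ_y,σ_z} and v_i ∈ {±1} for i ∉ T (each taken uniformly and independently), of 3^{|supp(X)|} · v^{supp(X)} · 1[X ⊆ A] · ⟨A,v| O |A,v⟩ equals Σ_{Q∈𝒫} c_Q · v^{supp(Q) ∩ T} · 1[Q_i ∈ {σ_I, A_i} for all i ∈ T, and Q_i = X_i for all i ∉ T]. -/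

import Mathlib

open Complex Matrix
open scoped BigOperators Classical

noncomputable section

/-- The space of `n`-qubit operators, as matrices indexed by bit-strings. -/
abbrev QMat (n : ℕ) := Matrix (Fin n → Fin 2) (Fin n → Fin 2) ℂ

/-- The single-qubit Pauli matrices, indexed so that `0 = σ_I`, `1 = σ_x`, `2 = σ_y`,
`3 = σ_z`. -/
def pauli1 (a : Fin 4) : Matrix (Fin 2) (Fin 2) ℂ :=
  if a = 0 then 1
  else if a = 1 then !![0, 1; 1, 0]
  else if a = 2 then !![0, -Complex.I; Complex.I, 0]
  else !![1, 0; 0, -1]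

/-- The `n`-qubit Pauli (Kronecker product of single-qubit Paulis) described by
`p : Fin n → Fin 4`. -/
def PauliOp {n : ℕ} (p : Fin n → Fin 4) : QMat n :=
  Matrix.of fun x y => ∏ i, pauli1 (p i) (x i) (y i)

/-- The support of a Pauli: the set of qubits where it acts non-trivially. -/
def psupp {n : ℕ} (p : Fin n → Fin 4) : Finset (Fin n) :=
  Finset.univ.filter fun i => p i ≠ 0

/-- The sign `±1` associated to a boolean (`true ↦ +1`, `false ↦ −1`). -/
def sgn (b : Bool) : ℝ := if b then 1 else -1

/-- `v^S = Π_{i ∈ S} v_i` for a sign vector `v : Fin n → Bool`. -/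
def sgnProd {n : ℕ} (S : Finset (Fin n)) (v : Fin n → Bool) : ℝ :=
  ∏ i ∈ S, sgn (v i)

/-- The unit eigenvector of the single-qubit Pauli `σ_x` (`a = 0`), `σ_y` (`a = 1`),
`σ_z` (`a = 2`) with eigenvalue `+1` (`b = true`) or `−1` (`b = false`). -/
def eig1 (a : Fin 3) (b : Bool) : Fin 2 → ℂ :=
  if a = 0 then
    fun j => ((Real.sqrt 2 : ℂ))⁻¹ * (if j = 0 then 1 else (if b then 1 else -1))
  else if a = 1 then
    fun j => ((Real.sqrt 2 : ℂ))⁻¹ * (if j = 0 then 1 else (if b then Complex.I else -Complex.I))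
  else
    fun j => if b then (if j = 0 then 1 else 0) else (if j = 0 then 0 else 1)

/-- The `n`-qubit Pauli-basis eigenvector `|A, v⟩ = ⊗_i |A_i, v_i⟩`, for a basis choice
`A : Fin n → Fin 3` (among `σ_x, σ_y, σ_z`) and signs `v : Fin n → Bool`. -/
def eigvec {n : ℕ} (A : Fin n → Fin 3) (v : Fin n → Bool) : (Fin n → Fin 2) → ℂ :=
  fun x => ∏ i, eig1 (A i) (v i) (x i)

/-- The rank-one projector `|ψ⟩⟨ψ|`. -/
def outer {m : Type*} [Fintype m] (ψ : m → ℂ) : Matrix m m ℂ :=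
  Matrix.vecMulVec ψ (star ψ)

/-- The `n`-qubit Pauli `B_S ⊗ I_{S̄}` which is `B_i` on `i ∈ S` and identity elsewhere. -/
def PauliOnSet {n : ℕ} (B : Fin n → Fin 3) (S : Finset (Fin n)) : QMat n :=
  PauliOp fun i => if i ∈ S then (B i).succ else 0

/-! Expanding `O` in the Pauli basis, `⟨A,v|Q|A,v⟩ = ∏ᵢ ⟨Aᵢ,vᵢ|Qᵢ|Aᵢ,vᵢ⟩`, where each factor
is `1` for `Qᵢ = σ_I`, `vᵢ` for `Qᵢ = Aᵢ` and `0` otherwise. The query weight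
`3^{|supp X|} v^{supp X} 1[X ⊆ A]` factorizes over the qubits as well, so for each `Q` the
average is a product of single-qubit averages. On `i ∈ T` nothing is averaged and `Xᵢ = σ_I`,
which leaves `⟨A0ᵢ,v0ᵢ|Qᵢ|A0ᵢ,v0ᵢ⟩`; on `i ∉ T` the weighted average over the six eigenstates
of a qubit is `1[Qᵢ = Xᵢ]`. -/

section ProductStates

variable {ι κ R : Type*} [Fintype ι] [DecidableEq ι] [Fintype κ] [CommSemiring R]

theorem dotProduct_kronecker_mulVec_prod (w u : ι → κ → R) (M : ι → Matrix κ κ R) :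
    (fun x : ι → κ => ∏ i, w i (x i)) ⬝ᵥ
        (Matrix.of fun x y : ι → κ => ∏ i, M i (x i) (y i)) *ᵥ (fun x => ∏ i, u i (x i))
      = ∏ i, w i ⬝ᵥ M i *ᵥ u i := by
  simp only [dotProduct, mulVec, of_apply, Finset.mul_sum, Fintype.prod_sum]
  refine Finset.sum_congr rfl fun x _ => Finset.sum_congr rfl fun y _ => ?_
  rw [← Finset.prod_mul_distrib, ← Finset.prod_mul_distrib]

theorem sum_piFinset_sum_piFinset_prod {α β : Type*} (s : ι → Finset α) (t : ι → Finset β)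
    (f : ι → α → β → R) :
    ∑ a ∈ Fintype.piFinset s, ∑ b ∈ Fintype.piFinset t, ∏ i, f i (a i) (b i)
      = ∏ i, ∑ a ∈ s i, ∑ b ∈ t i, f i a b := by
  rw [Finset.prod_univ_sum]
  refine Finset.sum_congr rfl fun a _ => ?_
  rw [Finset.prod_univ_sum]

end ProductStates

theorem filter_forall_mem_eq_piFinset {ι β : Type*} [Fintype ι] [DecidableEq ι] [Fintype β]
    (T : Finset ι) (f : ι → β) [DecidablePred fun g : ι → β => ∀ i ∈ T, g i = f i] :
    Finset.univ.filter (fun g : ι → β => ∀ i ∈ T, g i = f i)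
      = Fintype.piFinset fun i => if i ∈ T then {f i} else Finset.univ := by
  ext g
  simp only [Finset.mem_filter, Finset.mem_univ, true_and, Fintype.mem_piFinset]
  refine forall_congr' fun i => ?_
  by_cases hi : i ∈ T <;> simp [hi]

def pauliExpect (a : Fin 3) (b : Bool) (q : Fin 4) : ℂ :=
  if q = 0 then 1 else if q = a.succ then (sgn b : ℂ) else 0

theorem eig1_expect (a : Fin 3) (b : Bool) (q : Fin 4) :
    star (eig1 a b) ⬝ᵥ pauli1 q *ᵥ eig1 a b = pauliExpect a b q := by
  have hs : ((Real.sqrt 2 : ℝ) : ℂ) ^ 2 = 2 := by norm_cast; simp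
  fin_cases a <;> fin_cases q <;> cases b <;>
    simp [pauliExpect, eig1, pauli1, sgn, dotProduct, mulVec, Fin.sum_univ_two, one_apply,
      Fin.succ] <;>
    ring_nf <;> simp [hs] <;> norm_num

theorem eigvec_expect_pauliOp {n : ℕ} (A : Fin n → Fin 3) (v : Fin n → Bool)
    (Q : Fin n → Fin 4) :
    star (eigvec A v) ⬝ᵥ PauliOp Q *ᵥ eigvec A v = ∏ i, pauliExpect (A i) (v i) (Q i) := by
  have hstar : star (eigvec A v) = fun x => ∏ i, star (eig1 (A i) (v i)) (x i) := by
    funext x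
    exact star_prod _ _
  rw [hstar]
  exact (dotProduct_kronecker_mulVec_prod _ _ _).trans
    (Finset.prod_congr rfl fun i _ => eig1_expect _ _ _)

theorem eigvec_expect_eq_sum {n : ℕ} {O : QMat n} {c : (Fin n → Fin 4) → ℝ}
    (hc : O = ∑ Q, (c Q : ℂ) • PauliOp Q) (A : Fin n → Fin 3) (v : Fin n → Bool) :
    star (eigvec A v) ⬝ᵥ O *ᵥ eigvec A v
      = ∑ Q, (c Q : ℂ) * ∏ i, pauliExpect (A i) (v i) (Q i) := by
  simp only [hc, sum_mulVec, dotProduct_sum, smul_mulVec, dotProduct_smul, smul_eq_mul,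
    eigvec_expect_pauliOp]

def glWeight (x : Fin 4) (a : Fin 3) (b : Bool) : ℂ :=
  if x = 0 then 1 else if x = a.succ then 3 * (sgn b : ℂ) else 0

theorem prod_glWeight {n : ℕ} (X : Fin n → Fin 4) (A : Fin n → Fin 3) (v : Fin n → Bool) :
    ∏ i, glWeight (X i) (A i) (v i)
      = (3 : ℂ) ^ (psupp X).card * (sgnProd (psupp X) v : ℂ)
          * (if ∀ i, X i = 0 ∨ X i = (A i).succ then 1 else 0) := by
  by_cases hXA : ∀ i, X i = 0 ∨ X i = (A i).succ
  · have hfactor : ∀ i, glWeight (X i) (A i) (v i)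
        = if i ∈ psupp X then 3 * (sgn (v i) : ℂ) else 1 := fun i => by
      rcases hXA i with h | h <;> simp [glWeight, psupp, h]
    rw [Fintype.prod_congr _ _ hfactor, Fintype.prod_ite_mem, Finset.prod_mul_distrib,
      Finset.prod_const, sgnProd, Complex.ofReal_prod, if_pos hXA, mul_one]
  · obtain ⟨i, hi⟩ := not_forall.mp hXA
    rw [if_neg hXA, mul_zero]
    refine Finset.prod_eq_zero (Finset.mem_univ i) ?_
    simp only [not_or] at hi
    simp [glWeight, hi.1, hi.2]

theorem sum_glWeight_mul_pauliExpect (x q : Fin 4) :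
    ∑ a, ∑ b, glWeight x a b * pauliExpect a b q = if q = x then 6 else 0 := by
  fin_cases x <;> fin_cases q <;>
    simp [glWeight, pauliExpect, sgn, Fin.sum_univ_three, Fin.succ] <;> norm_num

theorem ite_mul_sum_glWeight_mul_pauliExpect {ι : Type*} [Fintype ι] [DecidableEq ι]
    (T : Finset ι) (i : ι) (x q : Fin 4) (a0 : Fin 3) (b0 : Bool) (hx : i ∈ T → x = 0) :
    (if i ∈ Tᶜ then (6 : ℂ)⁻¹ else 1)
        * ∑ a ∈ (if i ∈ T then {a0} else Finset.univ),
            ∑ b ∈ (if i ∈ T then {b0} else Finset.univ), glWeight x a b * pauliExpect a b q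
      = if i ∈ T then pauliExpect a0 b0 q else if q = x then 1 else 0 := by
  by_cases hi : i ∈ T
  · simp [hi, hx hi, glWeight]
  · rw [if_pos (Finset.mem_compl.mpr hi), if_neg hi, if_neg hi, if_neg hi,
      sum_glWeight_mul_pauliExpect]
    split_ifs <;> norm_num

theorem inv_three_pow_mul_two_pow_eq_prod {ι : Type*} [Fintype ι] [DecidableEq ι]
    (S : Finset ι) :
    ((3 ^ S.card * 2 ^ S.card : ℂ))⁻¹ = ∏ i, if i ∈ S then (6 : ℂ)⁻¹ else 1 := by
  rw [Fintype.prod_ite_mem, Finset.prod_const, ← mul_pow, inv_pow]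
  norm_num

theorem prod_pauliExpect_ite {n : ℕ} (T : Finset (Fin n)) (X Q : Fin n → Fin 4)
    (A0 : Fin n → Fin 3) (v0 : Fin n → Bool) :
    ∏ i, (if i ∈ T then pauliExpect (A0 i) (v0 i) (Q i) else if Q i = X i then 1 else 0)
      = (sgnProd (psupp Q ∩ T) v0 : ℂ)
          * (if (∀ i ∈ T, Q i = 0 ∨ Q i = (A0 i).succ) ∧ (∀ i ∉ T, Q i = X i)
              then 1 else 0) := by
  by_cases hQ : (∀ i ∈ T, Q i = 0 ∨ Q i = (A0 i).succ) ∧ (∀ i ∉ T, Q i = X i)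
  · have hfactor : ∀ i, (if i ∈ T then pauliExpect (A0 i) (v0 i) (Q i)
          else if Q i = X i then 1 else 0)
        = if i ∈ psupp Q ∩ T then (sgn (v0 i) : ℂ) else 1 := fun i => by
      by_cases hi : i ∈ T
      · rcases hQ.1 i hi with h | h <;> simp [pauliExpect, psupp, hi, h]
      · simp [hi, hQ.2 i hi]
    rw [Fintype.prod_congr _ _ hfactor, Fintype.prod_ite_mem, sgnProd, Complex.ofReal_prod,
      if_pos hQ, mul_one]
  · rw [if_neg hQ, mul_zero]
    simp only [not_and_or, not_forall, not_or] at hQ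
    rcases hQ with ⟨i, hi, hQ0, hQa⟩ | ⟨i, hi, hQX⟩
    · exact Finset.prod_eq_zero (Finset.mem_univ i) (by simp [pauliExpect, hi, hQ0, hQa])
    · exact Finset.prod_eq_zero (Finset.mem_univ i) (by simp [hi, hQX])

theorem gl_conditional_expectation_general (n : ℕ) (O : QMat n)
    (c : (Fin n → Fin 4) → ℝ) (hc : O = ∑ Q, (c Q : ℂ) • PauliOp Q)
    (T : Finset (Fin n)) (X : Fin n → Fin 4) (hX : psupp X ∩ T = ∅)
    (A0 : Fin n → Fin 3) (v0 : Fin n → Bool) :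
    ((3 ^ Tᶜ.card * 2 ^ Tᶜ.card : ℂ))⁻¹ *
        ∑ A ∈ Finset.univ.filter (fun A : Fin n → Fin 3 => ∀ i ∈ T, A i = A0 i),
          ∑ v ∈ Finset.univ.filter (fun v : Fin n → Bool => ∀ i ∈ T, v i = v0 i),
            (3 : ℂ) ^ (psupp X).card * (sgnProd (psupp X) v : ℂ)
              * (if ∀ i, X i = 0 ∨ X i = (A i).succ then 1 else 0)
              * (star (eigvec A v) ⬝ᵥ O.mulVec (eigvec A v))
      = ∑ Q : Fin n → Fin 4,
          (c Q : ℂ) * (sgnProd (psupp Q ∩ T) v0 : ℂ)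
            * (if (∀ i ∈ T, Q i = 0 ∨ Q i = (A0 i).succ) ∧ (∀ i ∉ T, Q i = X i)
                then 1 else 0) := by
  have hXT : ∀ i ∈ T, X i = 0 := fun i hi => by
    by_contra h
    have hmem : i ∈ psupp X ∩ T := by simp [psupp, h, hi]
    simp [hX] at hmem
  calc _ = (∏ i, if i ∈ Tᶜ then (6 : ℂ)⁻¹ else 1)
          * ∑ A ∈ Fintype.piFinset fun i => if i ∈ T then {A0 i} else Finset.univ,
              ∑ v ∈ Fintype.piFinset fun i => if i ∈ T then {v0 i} else Finset.univ,
                ∑ Q, (c Q : ℂ)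
                  * ∏ i, glWeight (X i) (A i) (v i) * pauliExpect (A i) (v i) (Q i) := by
        rw [inv_three_pow_mul_two_pow_eq_prod, filter_forall_mem_eq_piFinset,
          filter_forall_mem_eq_piFinset]
        simp only [← prod_glWeight, eigvec_expect_eq_sum hc, Finset.mul_sum,
          Finset.prod_mul_distrib]
        ac_rfl
    _ = ∑ Q, (c Q : ℂ) * ∏ i, (if i ∈ Tᶜ then (6 : ℂ)⁻¹ else 1)
          * ∑ a ∈ (if i ∈ T then {A0 i} else Finset.univ),
              ∑ b ∈ (if i ∈ T then {v0 i} else Finset.univ),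
                glWeight (X i) a b * pauliExpect a b (Q i) := by
        simp only [Finset.prod_mul_distrib, ← sum_piFinset_sum_piFinset_prod, Finset.mul_sum]
        refine (Finset.sum_congr rfl fun A _ => Finset.sum_comm).trans
          (Finset.sum_comm.trans (Finset.sum_congr rfl fun Q _ =>
            Finset.sum_congr rfl fun A _ => Finset.sum_congr rfl fun v _ => by ring))
    _ = _ := by
        refine Finset.sum_congr rfl fun Q _ => ?_
        rw [mul_assoc, ← prod_pauliExpect_ite]
        exact congrArg _ (Fintype.prod_congr _ _ fun i =>
          ite_mul_sum_glWeight_mul_pauliExpect T i (X i) (Q i) (A0 i) (v0 i) (hXT i))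

/-- equation (4.17) in the proof of Lemma 4.4: conditional-expectation
identity for Goldreich–Levin-type queries.  The average is over the choices of basis and
sign on the qubits outside `T` (the fixed values on `T` are those of `A0`, `v0`). -/
theorem gl_conditional_expectation (n : ℕ) (O : QMat n) (hO : O.IsHermitian)
    (c : (Fin n → Fin 4) → ℝ) (hc : O = ∑ Q, (c Q : ℂ) • PauliOp Q)
    (T : Finset (Fin n)) (X : Fin n → Fin 4) (hX : psupp X ∩ T = ∅)
    (A0 : Fin n → Fin 3) (v0 : Fin n → Bool) :
    ((3 ^ Tᶜ.card * 2 ^ Tᶜ.card : ℂ))⁻¹ *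
        ∑ A ∈ Finset.univ.filter (fun A : Fin n → Fin 3 => ∀ i ∈ T, A i = A0 i),
          ∑ v ∈ Finset.univ.filter (fun v : Fin n → Bool => ∀ i ∈ T, v i = v0 i),
            (3 : ℂ) ^ (psupp X).card * (sgnProd (psupp X) v : ℂ)
              * (if ∀ i, X i = 0 ∨ X i = (A i).succ then 1 else 0)
              * (star (eigvec A v) ⬝ᵥ O.mulVec (eigvec A v))
      = ∑ Q : Fin n → Fin 4,
          (c Q : ℂ) * (sgnProd (psupp Q ∩ T) v0 : ℂ)
            * (if (∀ i ∈ T, Q i = 0 ∨ Q i = (A0 i).succ) ∧ (∀ i ∉ T, Q i = X i)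
                then 1 else 0) :=
  gl_conditional_expectation_general n O c hc T X hX A0 v0
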